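/- arXiv:0902.1757 — 5 statements merged into one kernel-verified Lean document; each statement's English description precedes it below -/
import Mathlib

section
/- Let ε_n → 0 with ε_n ≥ d/n for some constant d > 0 and all n, let (Δ_n) be a sequence of strictly positive reals bounded above by 2π − δ₀ for some δ₀ > 0, and suppose log Δ_n / log ε_n → c ∈ [0,∞] as n → ∞. Then (1/(−log ε_n)) · Σ_{j=1}^n e^{i j Δ_n}·e^{−2 j ε_n}/j converges, as n → ∞, to min(c,1). -/
/-!
Put `z = e^{-2ε} e^{iΔ}`. The sum is the degree-`n` Taylor polynomial of `-log (1 - z)`, and since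
`n (1 - |z|) ≥ n ε ≥ d` its tail is `O(1/d)`. Next, `-log (1 - z) = -log |1 - z| - i arg (1 - z)`
with `|arg| ≤ π`, and `|1 - z|` is comparable to `max ε Δ`: the bound `Δ ≤ 2π - δ₀` keeps `e^{iΔ}`
away from `1` unless `Δ` itself is small. So the sum is
`-log (max ε Δ) + O(1) = -log ε · min 1 (log Δ / log ε) + O(1)`, and `-log ε → ∞`.
-/

open Filter
open scoped ENNReal Topology

namespace Real

theorem mul_le_sin_of_le_pi_sub {η x : ℝ} (hη : 0 ≤ η) (hx : 0 ≤ x) (hxη : x ≤ π - η) :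
    η / π ^ 2 * x ≤ sin x := by
  have hπ := pi_pos
  have hηπ : η / π ^ 2 * π = η / π := by field_simp
  rcases le_total x (π / 2) with hx2 | hx2
  · calc η / π ^ 2 * x ≤ 2 / π * x := by
          refine mul_le_mul_of_nonneg_right ?_ hx
          rw [div_le_div_iff₀ (by positivity) hπ]
          nlinarith
      _ ≤ sin x := mul_le_sin hx hx2
  · calc η / π ^ 2 * x ≤ η / π ^ 2 * π := by gcongr; linarith
      _ ≤ 2 / π * η := by rw [hηπ, div_le_iff₀ hπ]; field_simp; linarith
      _ ≤ 2 / π * (π - x) := by gcongr; linarith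
      _ ≤ sin (π - x) := mul_le_sin (by linarith) (by linarith)
      _ = sin x := sin_pi_sub x

theorem half_le_one_sub_exp_neg {x : ℝ} (hx0 : 0 ≤ x) (hx1 : x ≤ 1) :
    x / 2 ≤ 1 - exp (-x) := by
  rw [exp_neg, le_sub_comm, inv_le_iff_one_le_mul₀ (exp_pos x)]
  nlinarith [add_one_le_exp x]

theorem abs_log_sub_log_le_of_mul_le {k K m r : ℝ} (hk : 0 < k) (hm : 0 < m) (hkr : k * m ≤ r)
    (hrK : r ≤ K * m) : |log r - log m| ≤ |log k| + |log K| := by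
  have hr : 0 < r := (mul_pos hk hm).trans_le hkr
  rw [← log_div hr.ne' hm.ne']
  have hlo : log k ≤ log (r / m) := log_le_log hk (by rwa [le_div_iff₀ hm])
  have hhi : log (r / m) ≤ log K := log_le_log (div_pos hr hm) (by rwa [div_le_iff₀ hm])
  rw [abs_le]
  constructor <;> linarith [neg_abs_le (log k), le_abs_self (log K), abs_nonneg (log k),
    abs_nonneg (log K)]

theorem neg_log_max_eq_mul_min {ε Δ : ℝ} (hε0 : 0 < ε) (hε1 : ε < 1) (hΔ : 0 < Δ) :
    -log (max ε Δ) = -log ε * min 1 (log Δ / log ε) := by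
  have hlog : log ε < 0 := log_neg hε0 hε1
  rw [mul_min_of_nonneg _ _ (by linarith), mul_one, neg_mul, mul_div_cancel₀ _ hlog.ne]
  rcases le_total ε Δ with h | h
  · rw [max_eq_right h, min_eq_right (by linarith [log_le_log hε0 h])]
  · rw [max_eq_left h, min_eq_left (by linarith [log_le_log hΔ h])]

end Real

namespace Complex

theorem sq_norm_one_sub_ofReal_mul {w : ℂ} (hw : ‖w‖ = 1) (a : ℝ) :
    ‖1 - a * w‖ ^ 2 = (1 - a) ^ 2 + a * ‖1 - w‖ ^ 2 := by
  have hw2 : w.re ^ 2 + w.im ^ 2 = 1 := by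
    have := Complex.sq_norm w
    rw [hw, normSq_apply] at this
    linear_combination -this
  simp only [Complex.sq_norm, normSq_apply, sub_re, sub_im, mul_re, mul_im, ofReal_re, ofReal_im,
    one_re, one_im]
  linear_combination (a ^ 2 - a) * hw2

theorem norm_one_sub_le_two_mul_norm_one_sub_ofReal_mul {w : ℂ} (hw : ‖w‖ = 1) {a : ℝ}
    (ha : 1 / 4 ≤ a) : ‖1 - w‖ ≤ 2 * ‖1 - a * w‖ := by
  have h := sq_norm_one_sub_ofReal_mul hw a
  refine (sq_le_sq₀ (norm_nonneg _) (by positivity)).1 ?_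
  nlinarith [sq_nonneg (1 - a), sq_nonneg ‖1 - w‖]

theorem logTaylor_succ_neg (n : ℕ) (z : ℂ) :
    logTaylor (n + 1) (-z) = -∑ j ∈ Finset.Icc 1 n, z ^ j / j := by
  rw [logTaylor, Finset.sum_range_eq_add_Ico _ n.succ_pos, ← Finset.sum_neg_distrib]
  simp only [Nat.cast_zero, div_zero, zero_add]
  refine Finset.sum_congr (by ext; simp) fun j _ => ?_
  rw [neg_pow z, ← mul_assoc, ← pow_add, show j + 1 + j = 2 * j + 1 by ring, pow_succ, pow_mul]
  ring

theorem norm_sum_pow_div_add_log_one_sub_le (n : ℕ) {z : ℂ} (hz : ‖z‖ < 1) :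
    ‖∑ j ∈ Finset.Icc 1 n, z ^ j / j + log (1 - z)‖ ≤ 1 / ((n + 1) * (1 - ‖z‖)) := by
  have h := norm_log_sub_logTaylor_le n (z := -z) (by rwa [norm_neg])
  rw [logTaylor_succ_neg, norm_neg, ← sub_eq_add_neg, sub_neg_eq_add, add_comm] at h
  refine h.trans ?_
  have : 0 < 1 - ‖z‖ := by linarith
  rw [one_div, mul_inv, div_eq_mul_inv, mul_comm ((n:ℝ) + 1)⁻¹]
  gcongr
  exact mul_le_of_le_one_left (by positivity) (pow_le_one₀ (norm_nonneg _) hz.le)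

theorem norm_log_sub_log_norm_le_pi (w : ℂ) : ‖log w - (Real.log ‖w‖ : ℂ)‖ ≤ Real.pi := by
  rw [log, add_sub_cancel_left, norm_mul, norm_I, mul_one, norm_real, Real.norm_eq_abs]
  exact abs_arg_le_pi w

theorem norm_one_sub_exp_neg_mul_exp_le {ε : ℝ} (hε : 0 ≤ ε) (θ : ℝ) :
    ‖1 - (Real.exp (-(2 * ε)) : ℂ) * exp (I * θ)‖ ≤ 2 * ε + |θ| := by
  set a := Real.exp (-(2 * ε))
  have ha1 : a ≤ 1 := Real.exp_le_one_iff.2 (by linarith)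
  have h1a : 1 - a ≤ 2 * ε := by linarith [Real.add_one_le_exp (-(2 * ε))]
  calc ‖1 - (a : ℂ) * exp (I * θ)‖ = ‖((1 - a : ℝ) : ℂ) + (a : ℂ) * (1 - exp (I * θ))‖ := by
        push_cast; ring_nf
    _ ≤ (1 - a) + a * ‖exp (I * θ) - 1‖ := by
        refine (norm_add_le _ _).trans_eq ?_
        rw [norm_real, norm_mul, norm_real, norm_sub_rev (exp _), Real.norm_of_nonneg (by linarith),
          Real.norm_of_nonneg (Real.exp_pos _).le]
    _ ≤ 2 * ε + 1 * |θ| := by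
        gcongr
        exact (Real.norm_exp_I_mul_ofReal_sub_one_le).trans_eq (Real.norm_eq_abs θ)
    _ = 2 * ε + |θ| := by ring

theorem max_le_norm_one_sub_exp_neg_mul_exp {ε : ℝ} (hε0 : 0 ≤ ε) (hε : ε ≤ 1 / 4) (θ : ℝ) :
    max ε |Real.sin (θ / 2)| ≤ ‖1 - (Real.exp (-(2 * ε)) : ℂ) * exp (I * θ)‖ := by
  set a := Real.exp (-(2 * ε))
  have hw : ‖exp (I * θ)‖ = 1 := by rw [mul_comm]; exact norm_exp_ofReal_mul_I θ
  refine max_le ?_ ?_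
  · have h1a : ε ≤ 1 - a := by
      simpa using Real.half_le_one_sub_exp_neg (x := 2 * ε) (by linarith) (by linarith)
    refine h1a.trans (le_trans ?_ (abs_norm_sub_norm_le 1 ((a : ℂ) * exp (I * θ))))
    rw [norm_one, norm_mul, hw, mul_one, norm_real, Real.norm_of_nonneg (Real.exp_pos _).le]
    exact le_abs_self _
  · have ha : 1 / 4 ≤ a := by linarith [Real.add_one_le_exp (-(2 * ε))]
    have h := norm_one_sub_le_two_mul_norm_one_sub_ofReal_mul hw ha
    rw [norm_sub_rev, norm_exp_I_mul_ofReal_sub_one, norm_mul, Real.norm_eq_abs,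
      Real.norm_eq_abs, abs_two] at h
    linarith

theorem mul_max_le_norm_one_sub_exp_neg_mul_exp {ε Δ δ₀ : ℝ} (hε0 : 0 ≤ ε) (hε : ε ≤ 1 / 4)
    (hδ₀ : 0 ≤ δ₀) (hΔ0 : 0 ≤ Δ) (hΔ : Δ ≤ 2 * Real.pi - δ₀) :
    δ₀ / (4 * Real.pi ^ 2) * max ε Δ ≤ ‖1 - (Real.exp (-(2 * ε)) : ℂ) * exp (I * Δ)‖ := by
  have hκ1 : δ₀ / (4 * Real.pi ^ 2) ≤ 1 := by
    rw [div_le_one (by positivity)]; nlinarith [Real.pi_gt_three]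
  have hsin : δ₀ / (4 * Real.pi ^ 2) * Δ ≤ |Real.sin (Δ / 2)| := by
    have h := Real.mul_le_sin_of_le_pi_sub (η := δ₀ / 2) (x := Δ / 2) (by linarith) (by linarith)
      (by linarith)
    calc δ₀ / (4 * Real.pi ^ 2) * Δ = δ₀ / 2 / Real.pi ^ 2 * (Δ / 2) := by ring
      _ ≤ |Real.sin (Δ / 2)| := h.trans (le_abs_self _)
  refine le_trans ?_ (max_le_norm_one_sub_exp_neg_mul_exp hε0 hε Δ)
  rw [mul_max_of_nonneg _ _ (by positivity)]
  exact max_le_max (mul_le_of_le_one_left hε0 hκ1) hsin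

end Complex

theorem tendsto_min_one_of_tendsto_coe_ennreal {α : Type*} {l : Filter α} {t : α → ℝ} {c : ℝ≥0∞}
    (hc : Tendsto (fun x => (t x : EReal)) l (𝓝 c)) :
    Tendsto (fun x => min 1 (t x)) l (𝓝 (min c 1).toReal) := by
  have hlim : ((min c 1).toReal : EReal) = min 1 (c : EReal) := by
    rw [EReal.coe_ennreal_toReal (by simp), EReal.coe_ennreal_strictMono.monotone.map_min,
      EReal.coe_ennreal_one, min_comm]
  rw [← EReal.tendsto_coe, hlim]
  refine (tendsto_const_nhds.min hc).congr fun x => ?_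
  rw [EReal.coe_strictMono.monotone.map_min, EReal.coe_one]

theorem tendsto_inv_smul_of_norm_sub_le {α E : Type*} [SeminormedAddCommGroup E] [NormedSpace ℝ E]
    {l : Filter α} {f g : α → E} {L : α → ℝ} {C : ℝ} {a : E} (hL : Tendsto L l atTop)
    (hfg : ∀ᶠ x in l, ‖f x - g x‖ ≤ C) (hg : Tendsto (fun x => (L x)⁻¹ • g x) l (𝓝 a)) :
    Tendsto (fun x => (L x)⁻¹ • f x) l (𝓝 a) := by
  have h := (tendsto_inv_atTop_zero.comp hL).zero_smul_isBoundedUnder_le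
    (g := fun x => f x - g x) ⟨C, hfg⟩
  simpa [smul_sub] using h.add hg

open Complex in
theorem norm_sum_exp_mul_exp_div_sub_neg_log_max_le {ε Δ δ₀ d : ℝ} {n : ℕ} (hε0 : 0 < ε)
    (hε : ε ≤ 1 / 4) (hd : 0 < d) (hdn : d ≤ n * ε) (hδ₀ : 0 < δ₀) (hΔ0 : 0 < Δ)
    (hΔ : Δ ≤ 2 * Real.pi - δ₀) :
    ‖∑ j ∈ Finset.Icc 1 n, exp (I * j * Δ) * exp (-2 * j * ε) / j - ((-Real.log (max ε Δ) : ℝ) : ℂ)‖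
      ≤ 1 / d + Real.pi + (|Real.log (δ₀ / (4 * Real.pi ^ 2))| + |Real.log 3|) := by
  set a := Real.exp (-(2 * ε))
  set z := (a : ℂ) * exp (I * Δ)
  set r := ‖1 - z‖
  set m := max ε Δ
  have hsum : ∑ j ∈ Finset.Icc 1 n, exp (I * j * Δ) * exp (-2 * j * ε) / j
      = ∑ j ∈ Finset.Icc 1 n, z ^ j / j := by
    refine Finset.sum_congr rfl fun j _ => ?_
    rw [mul_pow, ofReal_exp, ← exp_nat_mul, ← exp_nat_mul, mul_comm, ← exp_add, ← exp_add]
    push_cast; ring_nf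
  have hε1 : ε ≤ 1 - a := by
    simpa using Real.half_le_one_sub_exp_neg (x := 2 * ε) (by linarith) (by linarith)
  have hz : ‖z‖ = a := by
    rw [norm_mul, norm_real, Real.norm_of_nonneg (Real.exp_pos _).le, mul_comm I,
      norm_exp_ofReal_mul_I, mul_one]
  have htail : ‖∑ j ∈ Finset.Icc 1 n, z ^ j / j + log (1 - z)‖ ≤ 1 / d := by
    refine (norm_sum_pow_div_add_log_one_sub_le n (by linarith)).trans ?_
    rw [hz]
    gcongr
    nlinarith
  have hlog : |Real.log r - Real.log m| ≤ |Real.log (δ₀ / (4 * Real.pi ^ 2))| + |Real.log 3| :=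
    Real.abs_log_sub_log_le_of_mul_le (by positivity) (lt_max_of_lt_left hε0)
      (mul_max_le_norm_one_sub_exp_neg_mul_exp hε0.le hε hδ₀.le hΔ0.le hΔ)
      ((norm_one_sub_exp_neg_mul_exp_le hε0.le Δ).trans (by
        rw [abs_of_pos hΔ0]; linarith [le_max_left ε Δ, le_max_right ε Δ]))
  rw [hsum]
  calc ‖∑ j ∈ Finset.Icc 1 n, z ^ j / j - ((-Real.log m : ℝ) : ℂ)‖
      = ‖(∑ j ∈ Finset.Icc 1 n, z ^ j / j + log (1 - z)) - (log (1 - z) - (Real.log r : ℂ))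
          - ((Real.log r - Real.log m : ℝ) : ℂ)‖ := by push_cast; ring_nf
    _ ≤ 1 / d + Real.pi + (|Real.log (δ₀ / (4 * Real.pi ^ 2))| + |Real.log 3|) := by
      refine (norm_sub_le _ _).trans (add_le_add ((norm_sub_le _ _).trans
        (add_le_add htail (norm_log_sub_log_norm_le_pi _))) ?_)
      rwa [norm_real, Real.norm_eq_abs]

/-- Lemma 1 of the paper: for `ε_n ≫ 1/n`, `ε_n → 0`, and `log Δ_n / log ε_n → c`,
`(1/(-log ε_n)) ∑_{j=1}^n e^{ijΔ_n} e^{-2jε_n}/j → min(c,1)`. -/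
theorem sum_exp_asymptotics_eps_large
    (ε : ℕ → ℝ) (hε0 : Tendsto ε atTop (𝓝 0))
    (d : ℝ) (hd : 0 < d) (hεlb : ∀ n : ℕ, d / n ≤ ε n)
    (Δ : ℕ → ℝ) (hΔpos : ∀ n, 0 < Δ n)
    (δ₀ : ℝ) (hδ₀ : 0 < δ₀) (hΔub : ∀ n, Δ n ≤ 2 * Real.pi - δ₀)
    (c : ℝ≥0∞)
    (hc : Tendsto (fun n => ((Real.log (Δ n) / Real.log (ε n) : ℝ) : EReal))
      atTop (𝓝 c)) :
    Tendsto (fun n => ((-Real.log (ε n))⁻¹ : ℂ) *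
        ∑ j ∈ Finset.Icc 1 n, Complex.exp (Complex.I * j * Δ n) *
          Complex.exp (-2 * j * ε n) / j)
      atTop (𝓝 (((min c 1).toReal : ℂ))) := by
  have hdn : ∀ᶠ n : ℕ in atTop, d ≤ n * ε n := by
    filter_upwards [eventually_ge_atTop 1] with n hn
    rw [← div_le_iff₀' (by exact_mod_cast hn)]
    exact hεlb n
  have hεpos : ∀ᶠ n in atTop, 0 < ε n := by
    filter_upwards [hdn] with n hdn
    exact pos_of_mul_pos_right (hd.trans_le hdn) n.cast_nonneg
  have hsmall : ∀ᶠ n in atTop, ε n ≤ 1 / 4 := hε0.eventually_le_const (by norm_num)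
  have hL : Tendsto (fun n => -Real.log (ε n)) atTop atTop :=
    tendsto_neg_atBot_atTop.comp
      (Real.tendsto_log_nhdsGT_zero.comp (tendsto_nhdsWithin_iff.2 ⟨hε0, hεpos⟩))
  have hlimit : Tendsto (fun n => (-Real.log (ε n))⁻¹ • ((-Real.log (max (ε n) (Δ n)) : ℝ) : ℂ))
      atTop (𝓝 ((min c 1).toReal : ℂ)) := by
    refine ((Complex.continuous_ofReal.tendsto _).comp
      (tendsto_min_one_of_tendsto_coe_ennreal hc)).congr' ?_
    filter_upwards [hεpos, hsmall] with n hεn hεn'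
    have hL0 : -Real.log (ε n) ≠ 0 := by linarith [Real.log_neg hεn (by linarith : ε n < 1)]
    rw [Real.neg_log_max_eq_mul_min hεn (by linarith) (hΔpos n), Complex.real_smul,
      ← Complex.ofReal_mul, inv_mul_cancel_left₀ hL0, Function.comp_apply]
  have hclose := hεpos.and (hsmall.and hdn) |>.mono fun n ⟨hεn, hεn', hdn⟩ =>
    norm_sum_exp_mul_exp_div_sub_neg_log_max_le hεn hεn' hd hdn hδ₀ (hΔpos n) (hΔub n)
  simpa [Complex.real_smul] using tendsto_inv_smul_of_norm_sub_le hL hclose hlimit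
end

section
/- Let (Δ_n) be a sequence of strictly positive reals bounded above by 2π − δ₀ for some δ₀ > 0, and suppose −log Δ_n / log n → c ∈ [0,∞] as n → ∞. Then (1/log n) · Σ_{j=1}^n e^{i j Δ_n}/j converges, as n → ∞, to min(c,1). -/
open Filter Finset Complex
open scoped ENNReal Topology

/-!
Write `z = e^{iθ}` and split `∑_{j ≤ n} z^j / j` at `m = min(n, ⌊1/θ⌋)`. For `j ≤ m` we have
`|z^j - 1| ≤ jθ`, so the head is the harmonic number `H_m = log (m + 1) + O(1)`. By Abel
summation the tail is at most `2 / ((m + 1) |1 - z|)`, which is `O(1)` because concavity of `sin`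
gives `|1 - e^{iθ}| ≥ K θ` uniformly for `θ ∈ (0, 2π - δ₀]`. Hence the sum equals
`min(max(log(1/θ), 0), log n) + O(1)` uniformly in `θ`, and after division by `log n` this is
`min(max(-log Δ_n / log n, 0), 1) + o(1) → min(c, 1)`.
-/

lemma norm_ofReal_mul_pow_le {z : ℂ} (hz : ‖z‖ ≤ 1) (r : ℝ) (j : ℕ) :
    ‖(r : ℂ) * z ^ j‖ ≤ |r| := by
  rw [norm_mul, norm_pow, norm_real, Real.norm_eq_abs]
  exact mul_le_of_le_one_right (abs_nonneg r) (pow_le_one₀ (norm_nonneg z) hz)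

lemma norm_one_sub_mul_sum_Ico_le {z : ℂ} (hz : ‖z‖ ≤ 1) {a : ℕ → ℝ} {k : ℕ}
    (ha : AntitoneOn a (Set.Ici k)) (ha₀ : ∀ j, 0 ≤ a j) (n : ℕ) :
    ‖(1 - z) * ∑ j ∈ Ico k n, (a j : ℂ) * z ^ j‖ ≤ 2 * a k := by
  rcases lt_or_ge n k with hnk | hkn
  · simpa [Ico_eq_empty_of_le hnk.le] using ha₀ k
  -- Abel summation: adding the boundary term `a n z^n` leaves a telescoping sum.
  have abel : ‖(1 - z) * ∑ j ∈ Ico k n, (a j : ℂ) * z ^ j + a n * z ^ n‖ ≤ 2 * a k - a n := by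
    induction n, hkn using Nat.le_induction with
    | base =>
      simpa [two_mul, abs_of_nonneg (ha₀ k)] using norm_ofReal_mul_pow_le hz (a k) k
    | succ n hkn ih =>
      have hstep : a (n + 1) ≤ a n := ha (Set.mem_Ici.2 hkn) (Set.mem_Ici.2 (by omega)) n.le_succ
      calc ‖(1 - z) * ∑ j ∈ Ico k (n + 1), (a j : ℂ) * z ^ j + a (n + 1) * z ^ (n + 1)‖
          = ‖((1 - z) * ∑ j ∈ Ico k n, (a j : ℂ) * z ^ j + a n * z ^ n)
              + ((a (n + 1) - a n : ℝ) : ℂ) * z ^ (n + 1)‖ := by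
            rw [sum_Ico_succ_top hkn]; push_cast; ring_nf
        _ ≤ (2 * a k - a n) + |a (n + 1) - a n| :=
            (norm_add_le _ _).trans (add_le_add ih (norm_ofReal_mul_pow_le hz _ _))
        _ = 2 * a k - a (n + 1) := by rw [abs_of_nonpos (by linarith)]; ring
  calc _ ≤ ‖(1 - z) * ∑ j ∈ Ico k n, (a j : ℂ) * z ^ j + a n * z ^ n‖ + ‖(a n : ℂ) * z ^ n‖ :=
        norm_le_add_norm_add _ _
    _ ≤ (2 * a k - a n) + |a n| := add_le_add abel (norm_ofReal_mul_pow_le hz _ _)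
    _ = 2 * a k := by rw [abs_of_nonneg (ha₀ n)]; ring

lemma norm_sum_Ioc_pow_div_le {z : ℂ} (hz : ‖z‖ ≤ 1) (m n : ℕ) :
    ‖∑ j ∈ Ioc m n, z ^ j / j‖ * ‖1 - z‖ ≤ 2 / (m + 1) := by
  have hanti : AntitoneOn (fun j : ℕ ↦ (j : ℝ)⁻¹) (Set.Ici (m + 1)) := fun i hi j _ hij ↦
    inv_anti₀ (Nat.cast_pos.2 (Nat.lt_of_lt_of_le m.succ_pos hi)) (by exact_mod_cast hij)
  have h := norm_one_sub_mul_sum_Ico_le hz hanti (fun j ↦ by positivity) (n + 1)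
  rw [← Ico_add_one_add_one_eq_Ioc, mul_comm, ← norm_mul]
  simpa [div_eq_mul_inv, mul_comm] using h

lemma norm_sum_Ioc_exp_div_le {θ K : ℝ} (hK : 0 < K) (hKθ : K * θ ≤ ‖1 - exp (I * θ)‖)
    {m : ℕ} (hm : 1 ≤ (m + 1) * θ) (n : ℕ) :
    ‖∑ j ∈ Ioc m n, exp (I * j * θ) / j‖ ≤ 2 / K := by
  set z := exp (I * θ)
  have hpow : ∀ j : ℕ, exp (I * j * θ) = z ^ j := fun j ↦ by rw [← exp_nat_mul]; ring_nf
  have hz : ‖z‖ ≤ 1 := (norm_exp_I_mul_ofReal θ).le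
  have habel := norm_sum_Ioc_pow_div_le hz m n
  simp_rw [hpow]
  rw [le_div_iff₀ hK]
  set S := ‖∑ j ∈ Ioc m n, z ^ j / j‖
  calc S * K ≤ S * ((m + 1) * ‖1 - z‖) := by
        gcongr; nlinarith
    _ = (m + 1) * (S * ‖1 - z‖) := by ring
    _ ≤ (m + 1) * (2 / (m + 1)) := by gcongr
    _ = 2 := by field_simp

lemma sin_div_mul_le_norm_one_sub_exp {x₀ θ : ℝ} (hx₀ : 0 < x₀) (hx₀π : x₀ < Real.pi)
    (hθ : 0 ≤ θ) (hθx₀ : θ ≤ 2 * x₀) : Real.sin x₀ / x₀ * θ ≤ ‖1 - exp (I * θ)‖ := by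
  set t := θ / (2 * x₀)
  have ht₀ : 0 ≤ t := by positivity
  have ht₁ : t ≤ 1 := (div_le_one (by positivity)).2 hθx₀
  have hconc := strictConcaveOn_sin_Icc.concaveOn.2 (Set.left_mem_Icc.2 Real.pi_pos.le)
    ⟨hx₀.le, hx₀π.le⟩ (sub_nonneg.2 ht₁) ht₀ (sub_add_cancel 1 t)
  have hx : t * x₀ = θ / 2 := by simp only [t]; field_simp
  simp only [smul_eq_mul, Real.sin_zero, mul_zero, zero_add, hx] at hconc
  rw [norm_sub_rev, norm_exp_I_mul_ofReal_sub_one, norm_mul, Real.norm_eq_abs, Real.norm_eq_abs,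
    abs_two]
  calc Real.sin x₀ / x₀ * θ = 2 * (t * Real.sin x₀) := by simp only [t]; field_simp
    _ ≤ 2 * |Real.sin (θ / 2)| := by gcongr; exact hconc.trans (le_abs_self _)

lemma abs_log_sub_log_le_one {w y : ℝ} (hw : 1 ≤ w) (hwy : w ≤ y) (hy : y ≤ w + 1) :
    |Real.log y - Real.log w| ≤ 1 := by
  have hw₀ : 0 < w := by linarith
  rw [abs_of_nonneg (sub_nonneg.2 (Real.log_le_log hw₀ hwy)),
    ← Real.log_div (hw₀.trans_le hwy).ne' hw₀.ne']
  calc Real.log (y / w) ≤ y / w - 1 := Real.log_le_sub_one_of_pos (div_pos (by linarith) hw₀)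
    _ ≤ 1 := by rw [div_sub_one hw₀.ne', div_le_one hw₀]; linarith

lemma abs_log_min_floor_add_one_sub_le {x : ℝ} (hx : 0 < x) {n : ℕ} (hn : 1 ≤ n) :
    |Real.log ((min n ⌊x⌋₊ : ℕ) + 1) - min (max (Real.log x) 0) (Real.log n)| ≤ 1 := by
  have hn' : (1 : ℝ) ≤ n := by exact_mod_cast hn
  have hmax : max (Real.log x) 0 = Real.log (max x 1) := by
    rcases le_total x 1 with h | h
    · simp [h, Real.log_nonpos hx.le h]
    · simp [h, Real.log_nonneg h]
  rw [hmax]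
  rcases le_or_gt n ⌊x⌋₊ with h | h
  · have hnx : (n : ℝ) ≤ max x 1 :=
      le_max_of_le_left ((Nat.cast_le.2 h).trans (Nat.floor_le hx.le))
    rw [min_eq_left h, min_eq_right (Real.log_le_log (by positivity) hnx)]
    exact abs_log_sub_log_le_one hn' (by linarith) le_rfl
  · have hxn : max x 1 ≤ ⌊x⌋₊ + 1 := max_le (Nat.lt_floor_add_one x).le (by simp)
    have hn'' : (⌊x⌋₊ : ℝ) + 1 ≤ n := by exact_mod_cast h
    rw [min_eq_right h.le, min_eq_left (Real.log_le_log (by positivity) (hxn.trans hn''))]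
    exact abs_log_sub_log_le_one (le_max_right x 1) hxn
      (by linarith [Nat.floor_le hx.le, le_max_left x 1])

lemma abs_harmonic_sub_log_add_one_le (m : ℕ) : |(harmonic m : ℝ) - Real.log (m + 1)| ≤ 1 := by
  have hlower := log_add_one_le_harmonic m
  have hupper := harmonic_le_one_add_log m
  have hlog : Real.log m ≤ Real.log (m + 1) := by
    rcases m.eq_zero_or_pos with rfl | hm
    · simp
    · exact Real.log_le_log (by exact_mod_cast hm) (by linarith)
  push_cast at hlower
  rw [abs_le]; constructor <;> linarith

lemma norm_sum_exp_div_sub_harmonic_le {θ : ℝ} (hθ : 0 ≤ θ) (m : ℕ) :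
    ‖∑ j ∈ Icc 1 m, exp (I * j * θ) / j - (harmonic m : ℝ)‖ ≤ m * θ := by
  rw [harmonic_eq_sum_Icc]
  push_cast
  rw [← sum_sub_distrib]
  calc _ ≤ ∑ _j ∈ Icc 1 m, θ := norm_sum_le_of_le _ fun j hj ↦ ?_
    _ = m * θ := by simp
  have hj : (0 : ℝ) < j := by simp only [mem_Icc] at hj; exact_mod_cast hj.1
  have hexp : exp (I * j * θ) / j - (j : ℂ)⁻¹ = (exp (I * ((j * θ : ℝ) : ℂ)) - 1) / (j : ℝ) := by
    push_cast; rw [← mul_assoc, sub_div, one_div]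
  rw [hexp, norm_div, norm_real, Real.norm_of_nonneg hj.le, div_le_iff₀ hj]
  calc _ ≤ ‖j * θ‖ := Real.norm_exp_I_mul_ofReal_sub_one_le
    _ = θ * j := by rw [Real.norm_of_nonneg (by positivity), mul_comm]

theorem norm_sum_exp_div_sub_le {θ K : ℝ} (hθ : 0 < θ) (hK : 0 < K)
    (hKθ : K * θ ≤ ‖1 - exp (I * θ)‖) {n : ℕ} (hn : 1 ≤ n) :
    ‖∑ j ∈ Icc 1 n, exp (I * j * θ) / j - (min (max (Real.log θ⁻¹) 0) (Real.log n) : ℝ)‖ ≤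
      3 + 2 / K := by
  -- split at `m = min n ⌊1/θ⌋`: below it `e^{ijθ} ≈ 1`, above it Abel summation applies
  set m := min n ⌊θ⁻¹⌋₊
  have hmθ : (m : ℝ) * θ ≤ 1 := calc
    (m : ℝ) * θ ≤ θ⁻¹ * θ := by
      gcongr; exact (Nat.cast_le.2 (min_le_right _ _)).trans (Nat.floor_le (by positivity))
    _ = 1 := inv_mul_cancel₀ hθ.ne'
  have htail : ‖∑ j ∈ Ioc m n, exp (I * j * θ) / j‖ ≤ 2 / K := by
    rcases le_or_gt n ⌊θ⁻¹⌋₊ with h | h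
    · rw [show m = n from min_eq_left h, Ioc_self, sum_empty, norm_zero]
      positivity
    · refine norm_sum_Ioc_exp_div_le hK hKθ ?_ n
      rw [show m = ⌊θ⁻¹⌋₊ from min_eq_right h.le, ← div_le_iff₀ hθ, one_div]
      exact (Nat.lt_floor_add_one _).le
  have hHT : |(harmonic m : ℝ) - min (max (Real.log θ⁻¹) 0) (Real.log n)| ≤ 2 := by
    have h := abs_log_min_floor_add_one_sub_le (inv_pos.2 hθ) hn
    linarith [abs_sub_le (harmonic m : ℝ) (Real.log (m + 1))
      (min (max (Real.log θ⁻¹) 0) (Real.log n)), abs_harmonic_sub_log_add_one_le m]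
  rw [show Icc 1 n = Ioc 0 n from rfl, ← sum_Ioc_consecutive _ m.zero_le (min_le_left _ _),
    show Ioc 0 m = Icc 1 m from rfl]
  calc _ = ‖(∑ j ∈ Icc 1 m, exp (I * j * θ) / j - (harmonic m : ℝ)) +
        ∑ j ∈ Ioc m n, exp (I * j * θ) / j +
        ((harmonic m - min (max (Real.log θ⁻¹) 0) (Real.log n) : ℝ) : ℂ)‖ := by
        congr 1; push_cast; ring
    _ ≤ m * θ + 2 / K + 2 := by
        refine (norm_add₃_le ..).trans (add_le_add (add_le_add
          (norm_sum_exp_div_sub_harmonic_le hθ.le m) htail) ?_)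
        rwa [norm_real, Real.norm_eq_abs]
    _ ≤ 3 + 2 / K := by linarith

lemma norm_inv_log_mul_sum_exp_div_sub_le {θ K : ℝ} (hθ : 0 < θ) (hK : 0 < K)
    (hKθ : K * θ ≤ ‖1 - exp (I * θ)‖) {n : ℕ} (hn : 2 ≤ n) :
    ‖(Real.log n : ℂ)⁻¹ * ∑ j ∈ Icc 1 n, exp (I * j * θ) / j
      - (min (max (-Real.log θ / Real.log n) 0) 1 : ℝ)‖ ≤ (3 + 2 / K) / Real.log n := by
  have hlog : 0 < Real.log n := Real.log_pos (by exact_mod_cast hn)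
  have hclip : min (max (-Real.log θ / Real.log n) 0) 1 =
      min (max (Real.log θ⁻¹) 0) (Real.log n) / Real.log n := by
    rw [Real.log_inv, ← min_div_div_right hlog.le, ← max_div_div_right hlog.le, zero_div,
      div_self hlog.ne']
  rw [hclip, ofReal_div, div_eq_inv_mul _ (Real.log n : ℂ), ← mul_sub, norm_mul, norm_inv,
    norm_real, Real.norm_of_nonneg hlog.le, inv_mul_eq_div]
  gcongr
  exact norm_sum_exp_div_sub_le hθ hK hKθ (by omega)

lemma tendsto_min_max_of_tendsto_ereal {α : Type*} {l : Filter α} {r : α → ℝ} {c : ℝ≥0∞}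
    (hc : Tendsto (fun a ↦ (r a : EReal)) l (𝓝 c)) :
    Tendsto (fun a ↦ min (max (r a) 0) 1) l (𝓝 (min c 1).toReal) := by
  have hclip := (hc.max (tendsto_const_nhds (x := (0 : EReal)))).min
    (tendsto_const_nhds (x := (1 : EReal)))
  have hc₁ : min (max (c : EReal) 0) 1 = (min c 1).toReal := by
    rw [max_eq_left (EReal.coe_ennreal_nonneg c), EReal.coe_ennreal_toReal
      (ne_top_of_le_ne_top ENNReal.one_ne_top (min_le_right c 1)),
      EReal.coe_ennreal_strictMono.monotone.map_min, EReal.coe_ennreal_one]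
  rw [hc₁] at hclip
  refine EReal.tendsto_coe.1 (hclip.congr fun a ↦ ?_)
  simp [EReal.coe_strictMono.monotone.map_min, EReal.coe_strictMono.monotone.map_max]

/-- Lemma 2 of the paper: if `-log Δ_n / log n → c` then
`(1/log n) ∑_{j=1}^n e^{ijΔ_n}/j → min(c,1)`. -/
theorem sum_exp_asymptotics_eps_small
    (Δ : ℕ → ℝ) (hΔpos : ∀ n, 0 < Δ n)
    (δ₀ : ℝ) (hδ₀ : 0 < δ₀) (hΔub : ∀ n, Δ n ≤ 2 * Real.pi - δ₀)
    (c : ℝ≥0∞)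
    (hc : Tendsto (fun n => ((-Real.log (Δ n) / Real.log n : ℝ) : EReal))
      atTop (𝓝 c)) :
    Tendsto (fun n : ℕ => ((Real.log n : ℂ))⁻¹ *
        ∑ j ∈ Finset.Icc 1 n, Complex.exp (Complex.I * j * Δ n) / j)
      atTop (𝓝 (((min c 1).toReal : ℂ))) := by
  obtain ⟨K, hK, hKΔ⟩ : ∃ K > 0, ∀ n, K * Δ n ≤ ‖1 - exp (I * Δ n)‖ := by
    have hx₀ : 0 < Real.pi - δ₀ / 2 := by linarith [hΔpos 0, hΔub 0]
    have hx₀π : Real.pi - δ₀ / 2 < Real.pi := by linarith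
    exact ⟨_, div_pos (Real.sin_pos_of_pos_of_lt_pi hx₀ hx₀π) hx₀, fun n ↦
      sin_div_mul_le_norm_one_sub_exp hx₀ hx₀π (hΔpos n).le (by linarith [hΔub n])⟩
  have hclip := tendsto_min_max_of_tendsto_ereal hc
  have hclose : Tendsto (fun n : ℕ ↦ (Real.log n : ℂ)⁻¹ * ∑ j ∈ Icc 1 n, exp (I * j * Δ n) / j
      - (min (max (-Real.log (Δ n) / Real.log n) 0) 1 : ℝ)) atTop (𝓝 0) := by
    refine squeeze_zero_norm' (a := fun n : ℕ ↦ (3 + 2 / K) / Real.log n) ?_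
      (tendsto_const_nhds.div_atTop (Real.tendsto_log_atTop.comp tendsto_natCast_atTop_atTop))
    filter_upwards [eventually_ge_atTop 2] with n hn
    exact norm_inv_log_mul_sum_exp_div_sub_le (hΔpos n) hK (hKΔ n) hn
  simpa using hclose.add ((continuous_ofReal.tendsto _).comp hclip)
end

section
/- Let n ≥ 2 and let p₁ < p₂ < … < p_n be the first n prime numbers. Let a, b ≥ 1 be integers and let k = (k₁,…,k_n) ∈ ℤⁿ be nonzero with Σ_{i : k_i > 0} k_i ≤ a and Σ_{i : k_i < 0} (−k_i) ≤ b. Then |Σ_{i=1}^n k_i · log p_i| ≥ n^{−2·max(a,b)}. -/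
/-!
Split `k` into its positive and negative parts `e` and `f`, so that `∑ kᵢ log pᵢ = log P - log Q`
with `P = ∏ pᵢ ^ eᵢ` and `Q = ∏ pᵢ ^ fᵢ`. By unique factorisation `P ≠ Q`, and since
`p_n ≤ n²` both are at most `n ^ (2 max(a, b))`. Two distinct positive integers `Y < X ≤ M` satisfy
`log X - log Y ≥ 1 - Y / X ≥ 1 / M`.

The bound `p_n ≤ n²`, i.e. `π(m²) ≥ m`, comes from `2 ^ N ≤ (N + 1) lcm(1, …, N) ≤ (N + 1) N ^ π(N)`.
-/

open Finset Real

namespace Nat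

theorem lcmUpto_le_pow_primeCounting (N : ℕ) : lcmUpto N ≤ N ^ primeCounting N := by
  rcases eq_or_ne N 0 with rfl | hN
  · simp [lcmUpto]
  rw [lcmUpto_eq_prod_pow_log, ← primesLE_card_eq_primeCounting]
  exact prod_le_pow_card _ _ _ fun p _ => pow_log_le_self p hN

theorem two_mul_sq_le_two_pow {m : ℕ} (hm : 7 ≤ m) : 2 * m ^ 2 ≤ 2 ^ m := by
  induction m, hm using Nat.le_induction with
  | base => norm_num
  | succ m hm ih => rw [pow_succ 2 m]; nlinarith

theorem le_primeCounting_sq {m : ℕ} (hm : 2 ≤ m) : m ≤ primeCounting (m ^ 2) := by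
  rcases lt_or_ge m 7 with hm7 | hm7
  · interval_cases m <;> decide
  by_contra! h
  have hsq := two_mul_sq_le_two_pow hm7
  have : 2 ^ m ^ 2 < 2 ^ m ^ 2 := calc
    2 ^ m ^ 2 ≤ (m ^ 2 + 1) * lcmUpto (m ^ 2) := Chebyshev.two_pow_le_mul_lcmUpto _
    _ ≤ (m ^ 2 + 1) * (m ^ 2) ^ primeCounting (m ^ 2) := by
      gcongr; exact lcmUpto_le_pow_primeCounting _
    _ ≤ (m ^ 2 + 1) * (m ^ 2) ^ (m - 1) :=
      Nat.mul_le_mul_left _ (Nat.pow_le_pow_right (by positivity) (by omega))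
    _ < 2 * m ^ 2 * (m ^ 2) ^ (m - 1) := by gcongr; nlinarith
    _ ≤ 2 ^ m * (2 ^ m) ^ (m - 1) := Nat.mul_le_mul hsq (Nat.pow_le_pow_left (by omega) _)
    _ = 2 ^ m ^ 2 := by
      rw [← pow_succ', ← pow_mul, Nat.succ_eq_add_one, Nat.sub_add_cancel (by omega), sq]
  exact lt_irrefl _ this

theorem nth_prime_le_sq_of_lt {i n : ℕ} (hn : 2 ≤ n) (hi : i < n) : nth Nat.Prime i ≤ n ^ 2 := by
  have hcount : n - 1 < count Nat.Prime (n ^ 2 + 1) := by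
    have := le_primeCounting_sq hn
    rw [primeCounting, primeCounting'] at this
    omega
  calc nth Nat.Prime i ≤ nth Nat.Prime (n - 1) := nth_monotone infinite_setOfPred_prime (by omega)
    _ ≤ n ^ 2 := Nat.lt_succ_iff.mp (nth_lt_of_lt_count hcount)

end Nat

theorem Int.natCast_sum_toNat {ι : Type*} (s : Finset ι) (k : ι → ℤ) :
    ((∑ i ∈ s, (k i).toNat : ℕ) : ℤ) = ∑ i ∈ s with 0 < k i, k i := by
  rw [sum_filter]
  push_cast
  exact sum_congr rfl fun i _ => by split_ifs <;> omega

theorem Real.inv_le_log_sub_log {x y : ℝ} (hy : 0 < y) (hxy : y + 1 ≤ x) :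
    x⁻¹ ≤ log x - log y := by
  have hx : 0 < x := by linarith
  calc x⁻¹ ≤ 1 - (x / y)⁻¹ := by
        rw [inv_div, one_sub_div hx.ne', inv_eq_one_div, div_le_div_iff_of_pos_right hx]; linarith
    _ ≤ log (x / y) := one_sub_inv_le_log_of_pos (by positivity)
    _ = log x - log y := log_div hx.ne' hy.ne'

theorem Real.inv_le_abs_log_sub_log_of_ne {X Y M : ℕ} (hX : 0 < X) (hY : 0 < Y) (hXY : X ≠ Y)
    (hXM : X ≤ M) (hYM : Y ≤ M) : (M : ℝ)⁻¹ ≤ |log X - log Y| := by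
  wlog hlt : Y < X generalizing X Y
  · rw [abs_sub_comm]
    exact this hY hX hXY.symm hYM hXM (by omega)
  calc (M : ℝ)⁻¹ ≤ (X : ℝ)⁻¹ := inv_anti₀ (by positivity) (by exact_mod_cast hXM)
    _ ≤ log X - log Y := inv_le_log_sub_log (by positivity) (by exact_mod_cast hlt)
    _ ≤ |log X - log Y| := le_abs_self _

section

variable {ι : Type*} [Fintype ι]

theorem Nat.factorization_prod_pow_of_injective {p : ι → ℕ} (hp : ∀ i, (p i).Prime)
    (hinj : Function.Injective p) (e : ι → ℕ) (j : ι) :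
    (∏ i, p i ^ e i).factorization (p j) = e j := by
  rw [Nat.factorization_prod fun i _ => pow_ne_zero _ (hp i).ne_zero, Finsupp.finsetSum_apply,
    Finset.sum_eq_single j]
  · simp [(hp j).factorization_pow]
  · intro i _ hij
    rw [(hp i).factorization_pow, Finsupp.single_eq_of_ne' (hinj.ne hij)]
  · simp

theorem Nat.prod_pow_injective {p : ι → ℕ} (hp : ∀ i, (p i).Prime) (hinj : Function.Injective p) :
    Function.Injective fun e : ι → ℕ => ∏ i, p i ^ e i := fun e f h => funext fun j => by
  simpa only [Nat.factorization_prod_pow_of_injective hp hinj] using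
    congrArg (fun N => N.factorization (p j)) h

theorem Real.sum_intCast_mul_log_eq_log_sub_log {p : ι → ℕ} (hp : ∀ i, p i ≠ 0) (k : ι → ℤ) :
    ∑ i, (k i : ℝ) * log (p i) =
      log (∏ i, p i ^ (k i).toNat : ℕ) - log (∏ i, p i ^ (-k i).toNat : ℕ) := by
  have hp' : ∀ (e : ι → ℕ), ∀ i ∈ univ, (p i : ℝ) ^ e i ≠ 0 := fun e i _ =>
    pow_ne_zero _ (by exact_mod_cast hp i)
  push_cast
  rw [log_prod (hp' _), log_prod (hp' _), ← sum_sub_distrib]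
  refine sum_congr rfl fun i _ => ?_
  rw [log_pow, log_pow, ← sub_mul]
  congr 1
  exact_mod_cast (Int.toNat_sub_toNat_neg (k i)).symm

theorem Real.inv_pow_le_abs_sum_mul_log_primes {p : ι → ℕ}
    (hp : ∀ i, (p i).Prime) (hinj : Function.Injective p) {B : ℕ} (hB : ∀ i, p i ≤ B)
    {k : ι → ℤ} (hk : k ≠ 0) {a b : ℕ} (hpos : ∑ i with 0 < k i, k i ≤ a)
    (hneg : ∑ i with k i < 0, -k i ≤ b) :
    ((B : ℝ) ^ max a b)⁻¹ ≤ |∑ i, (k i : ℝ) * log (p i)| := by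
  obtain ⟨i₀, -⟩ := Function.ne_iff.mp hk
  have hB0 : 0 < B := (hp i₀).pos.trans_le (hB i₀)
  have hbound : ∀ e : ι → ℕ, ∑ i, e i ≤ max a b → ∏ i, p i ^ e i ≤ B ^ max a b := fun e he =>
    calc ∏ i, p i ^ e i ≤ ∏ i, B ^ e i := prod_le_prod' fun i _ => Nat.pow_le_pow_left (hB i) _
      _ = B ^ ∑ i, e i := prod_pow_eq_pow_sum _ _ _
      _ ≤ B ^ max a b := Nat.pow_le_pow_right hB0 he
  have hposPart : ∑ i, (k i).toNat ≤ max a b := by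
    have := Int.natCast_sum_toNat univ k
    omega
  have hnegPart : ∑ i, (-k i).toNat ≤ max a b := by
    have := Int.natCast_sum_toNat univ (-k ·)
    simp only [neg_pos] at this
    omega
  have hne : ∏ i, p i ^ (k i).toNat ≠ ∏ i, p i ^ (-k i).toNat := fun h =>
    hk <| funext fun i => by
      have := congrFun (Nat.prod_pow_injective hp hinj h) i
      rw [Pi.zero_apply]
      omega
  rw [sum_intCast_mul_log_eq_log_sub_log fun i => (hp i).ne_zero]
  exact_mod_cast inv_le_abs_log_sub_log_of_ne (prod_pos fun i _ => pow_pos (hp i).pos _)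
    (prod_pos fun i _ => pow_pos (hp i).pos _) hne (hbound _ hposPart) (hbound _ hnegPart)

end

theorem log_primes_linear_combination_lower_bound_general
    (n : ℕ) (hn : 2 ≤ n) (a b : ℕ)
    (k : Fin n → ℤ) (hk : k ≠ 0)
    (hpos : (∑ i ∈ Finset.univ.filter fun i => 0 < k i, k i) ≤ (a : ℤ))
    (hneg : (∑ i ∈ Finset.univ.filter fun i => k i < 0, -k i) ≤ (b : ℤ)) :
    (n : ℝ) ^ (-(2 * (max a b : ℤ))) ≤
      |∑ i, (k i : ℝ) * Real.log (Nat.nth Nat.Prime i)| := by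
  have key := inv_pow_le_abs_sum_mul_log_primes (fun i : Fin n => Nat.prime_nth_prime i)
    ((Nat.nth_injective Nat.infinite_setOfPred_prime).comp Fin.val_injective)
    (fun i => Nat.nth_prime_le_sq_of_lt hn i.2) hk hpos hneg
  rw [zpow_neg, ← Nat.cast_max, ← Nat.cast_ofNat, ← Nat.cast_mul, zpow_natCast, pow_mul]
  exact_mod_cast key

/-- Lemma 4 of the paper: if `p₁ < … < p_n` are the first `n` primes and `k ∈ ℤⁿ` is nonzero
with positive part bounded by `a` and negative part bounded by `b`, then
`|∑ kᵢ log pᵢ| ≥ n^{-2 max(a,b)}`. -/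
theorem log_primes_linear_combination_lower_bound
    (n : ℕ) (hn : 2 ≤ n) (a b : ℕ) (ha : 1 ≤ a) (hb : 1 ≤ b)
    (k : Fin n → ℤ) (hk : k ≠ 0)
    (hpos : (∑ i ∈ Finset.univ.filter fun i => 0 < k i, k i) ≤ (a : ℤ))
    (hneg : (∑ i ∈ Finset.univ.filter fun i => k i < 0, -k i) ≤ (b : ℤ)) :
    (n : ℝ) ^ (-(2 * (max a b : ℤ))) ≤
      |∑ i, (k i : ℝ) * Real.log (Nat.nth Nat.Prime i)| :=
  log_primes_linear_combination_lower_bound_general n hn a b k hk hpos hneg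
end

section
/- Let ℓ ≥ 2 and let c₁,…,c_{ℓ−1} be positive real numbers. Then the real symmetric ℓ×ℓ matrix C defined by C_{ii} = 1 and, for i < j, C_{ij} = C_{ji} = min(1, min_{i ≤ k ≤ j−1} c_k), is positive semidefinite. -/
/-!
Layer cake: the entries of `C` lie in `[0, 1]`, so `C_ij = ∫₀¹ [t ≤ C_ij] dt`, and the quadratic
form of `C` is the integral of those of the superlevel matrices `[t ≤ C_ij]`. For `t ≤ 1` we have
`t ≤ C_ij` exactly when no `c_k < t` lies between `i` and `j`, so the superlevel matrix is the
indicator matrix of a partition of the indices into runs: a Gram matrix of indicator vectors.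
-/

open MeasureTheory

theorem antitone_ite_le (m : ℝ) : Antitone fun t : ℝ => if t ≤ m then (1 : ℝ) else 0 := by
  intro s t hst
  by_cases ht : t ≤ m
  · simp [ht, hst.trans ht]
  · simp only [ht, if_false]
    split_ifs <;> norm_num

theorem integral_ite_le (m : ℝ) (h0 : 0 ≤ m) (h1 : m ≤ 1) :
    ∫ t in (0 : ℝ)..1, (if t ≤ m then (1 : ℝ) else 0) = m := by
  have hint (a b : ℝ) := (antitone_ite_le m).intervalIntegrable (μ := volume) (a := a) (b := b)
  rw [← intervalIntegral.integral_add_adjacent_intervals (hint 0 m) (hint m 1)]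
  have below : ∫ t in (0 : ℝ)..m, (if t ≤ m then (1 : ℝ) else 0) = m := by
    rw [intervalIntegral.integral_congr (g := fun _ => (1 : ℝ)) fun t ht => ?_]
    · simp
    · rw [Set.uIcc_of_le h0] at ht
      simp [ht.2]
  have above : ∫ t in m..1, (if t ≤ m then (1 : ℝ) else 0) = 0 := by
    rw [intervalIntegral.integral_congr_ae (g := fun _ => (0 : ℝ)) (ae_of_all _ fun t ht => ?_)]
    · simp
    · rw [Set.uIoc_of_le h1] at ht
      simp [not_le.mpr ht.1]
  rw [below, above, add_zero]

namespace Matrix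

variable {ι : Type*}

theorem posSemidef_ite_apply_eq_apply {R κ : Type*} [Ring R] [PartialOrder R] [StarRing R]
    [StarOrderedRing R] [Finite ι] [DecidableEq κ] (f : ι → κ) :
    (of fun i j => if f i = f j then (1 : R) else 0).PosSemidef := by
  have := Fintype.ofFinite (Set.range f)
  let B : Matrix (Set.range f) ι R := of fun k i => if f i = k then 1 else 0
  convert posSemidef_conjTranspose_mul_self B using 1
  ext i j
  rw [mul_apply, Finset.sum_eq_single ⟨f i, i, rfl⟩]
  · by_cases h : f i = f j <;> simp [B, h, eq_comm]
  · rintro k - hk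
    simp [B, Ne.symm (Subtype.ext_iff.not.mp hk)]
  · simp

noncomputable def superlevel (M : Matrix ι ι ℝ) (t : ℝ) : Matrix ι ι ℝ :=
  of fun i j => if t ≤ M i j then 1 else 0

theorem isSymm_of_forall_isSymm_superlevel {M : Matrix ι ι ℝ}
    (h : ∀ i j, (M.superlevel (M i j)).IsSymm) : M.IsSymm := by
  have hle (i j : ι) : M i j ≤ M j i := by
    have := congrFun₂ (h i j) j i
    simp only [superlevel, transpose_apply, of_apply, le_refl, if_true] at this
    by_contra hlt
    simp [not_le.mp hlt |>.not_ge] at this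
  ext i j
  exact le_antisymm (hle j i) (hle i j)

theorem posSemidef_of_forall_posSemidef_superlevel [Fintype ι] {M : Matrix ι ι ℝ}
    (h0 : ∀ i j, 0 ≤ M i j) (h1 : ∀ i j, M i j ≤ 1)
    (h : ∀ t ∈ Set.Icc (0 : ℝ) 1, (M.superlevel t).PosSemidef) : M.PosSemidef := by
  refine .of_dotProduct_mulVec_nonneg ?_ fun x => ?_
  · exact isSymm_of_forall_isSymm_superlevel fun i j => (h _ ⟨h0 i j, h1 i j⟩).isHermitian
  have hint (i j : ι) :
      IntervalIntegrable (fun t => x i * (M.superlevel t i j * x j)) volume 0 1 :=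
    ((antitone_ite_le (M i j)).intervalIntegrable.mul_const _).const_mul _
  have hrow (i : ι) :
      IntervalIntegrable (fun t => ∑ j, x i * (M.superlevel t i j * x j)) volume 0 1 := by
    simpa only [Finset.sum_fn] using IntervalIntegrable.sum Finset.univ fun j _ => hint i j
  calc (0 : ℝ) ≤ ∫ t in (0 : ℝ)..1, star x ⬝ᵥ M.superlevel t *ᵥ x :=
        intervalIntegral.integral_nonneg zero_le_one fun t ht =>
          (h t ht).dotProduct_mulVec_nonneg x
    _ = star x ⬝ᵥ M *ᵥ x := by
        simp only [dotProduct, mulVec, star_trivial, Finset.mul_sum]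
        rw [intervalIntegral.integral_finsetSum fun i _ => hrow i]
        refine Finset.sum_congr rfl fun i _ => ?_
        rw [intervalIntegral.integral_finsetSum fun j _ => hint i j]
        refine Finset.sum_congr rfl fun j _ => ?_
        rw [intervalIntegral.integral_const_mul, intervalIntegral.integral_mul_const]
        simp only [superlevel, of_apply, integral_ite_le _ (h0 i j) (h1 i j)]

end Matrix

section

variable {β α : Type*} [LinearOrder β] [LinearOrder α]

theorem setOf_le_and_lt_eq_iff_of_le (c : β → α) (t : α) {a b : β} (hab : a ≤ b) :
    {k | k ≤ a ∧ c k < t} = {k | k ≤ b ∧ c k < t} ↔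
      ∀ k, a < k → k ≤ b → t ≤ c k := by
  simp only [Set.ext_iff, Set.mem_ofPred_eq]
  constructor
  · intro h k hak hkb
    by_contra! hck
    exact hak.not_ge ((h k).mpr ⟨hkb, hck⟩).1
  · intro h k
    refine ⟨fun hk => ⟨hk.1.trans hab, hk.2⟩, fun hk => ⟨?_, hk.2⟩⟩
    by_contra! hak
    exact (h k hak hk.1).not_gt hk.2

theorem setOf_le_and_lt_eq_iff (c : β → α) (t : α) (a b : β) :
    {k | k ≤ a ∧ c k < t} = {k | k ≤ b ∧ c k < t} ↔
      ∀ k, min a b < k → k ≤ max a b → t ≤ c k := by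
  rcases le_total a b with hab | hba
  · rw [min_eq_left hab, max_eq_right hab, setOf_le_and_lt_eq_iff_of_le c t hab]
  · rw [min_eq_right hba, max_eq_left hba, eq_comm, setOf_le_and_lt_eq_iff_of_le c t hba]

end

/-- The covariance matrix `C` appearing in the paper: `C_{ii} = 1` and, for `i < j`,
`C_{ij} = min(1, min_{i ≤ k ≤ j-1} c_k)` (with `1`-based indices, `c` indexed by `1,…,ℓ-1`),
is positive semidefinite. -/
theorem covariance_matrix_posSemidef
    (ℓ : ℕ) (c : ℕ → ℝ) (hc : ∀ k, 1 ≤ k → k ≤ ℓ - 1 → 0 < c k) :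
    Matrix.PosSemidef (Matrix.of fun i j : Fin ℓ =>
      if h : i = j then (1 : ℝ)
      else min 1 ((Finset.Icc (min i.val j.val + 1) (max i.val j.val)).inf'
        (Finset.nonempty_Icc.mpr
          (by have : i.val ≠ j.val := fun hv => h (Fin.ext hv); omega)) c)) := by
  classical
  refine Matrix.posSemidef_of_forall_posSemidef_superlevel (fun i j => ?_) (fun i j => ?_)
    fun t ht => ?_
  · rw [Matrix.of_apply]
    split_ifs
    · exact zero_le_one
    · refine le_min zero_le_one (Finset.le_inf' _ _ fun k hk => (hc k ?_ ?_).le) <;>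
        grind
  · rw [Matrix.of_apply]
    split_ifs
    exacts [le_rfl, min_le_left _ _]
  · convert Matrix.posSemidef_ite_apply_eq_apply (R := ℝ)
      (fun i : Fin ℓ => {k | k ≤ i.val ∧ c k < t}) using 1
    ext i j
    simp only [Matrix.superlevel, Matrix.of_apply]
    refine if_congr ?_ rfl rfl
    rw [setOf_le_and_lt_eq_iff]
    split_ifs with hij
    · simp only [hij, min_self, max_self, ht.2, true_iff]
      intro k hjk hkj
      omega
    · simp [ht.2, Finset.le_inf'_iff]
end

section
/- Let ℓ ≥ 1 and let c₁,…,c_ℓ be positive real numbers. Then the real symmetric ℓ×ℓ matrix M defined by M_{ij} = min_{min(i,j) ≤ k ≤ max(i,j)} c_k is positive semidefinite. -/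
/-!
Let `m = c p` be the least value of `c` on the index range. Every entry of the matrix is at
least `m`, and the entries whose interval contains `p` equal `m`. Hence `M = m J + M'`, where
`J` is the all-ones matrix and `M'` is block diagonal, its two blocks (indices below `p` and
above `p`) being matrices of the same shape built from `c - m ≥ 0`. Induction on the size of the
index range finishes the proof.
-/

open Finset

theorem sum_sum_mul_const_add_mul {ι R : Type*} [CommSemiring R] (S : Finset ι) (x : ι → R)
    (m : R) (A : ι → ι → R) :
    ∑ i ∈ S, ∑ j ∈ S, x i * (m + A i j) * x j
      = m * (∑ i ∈ S, x i) ^ 2 + ∑ i ∈ S, ∑ j ∈ S, x i * A i j * x j := by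
  rw [sq, sum_mul_sum, mul_sum, ← sum_add_distrib]
  refine sum_congr rfl fun i _ => ?_
  rw [mul_sum, ← sum_add_distrib]
  exact sum_congr rfl fun j _ => by ring

theorem sum_sum_eq_add_of_eq_zero_across {α M : Type*} [LinearOrder α] [AddCommMonoid M]
    (S : Finset α) (p : α) (f : α → α → M)
    (hf : ∀ i ∈ S, ∀ j ∈ S, min i j ≤ p → p ≤ max i j → f i j = 0) :
    ∑ i ∈ S, ∑ j ∈ S, f i j
      = ∑ i ∈ S with i < p, ∑ j ∈ S with j < p, f i j
        + ∑ i ∈ S with p < i, ∑ j ∈ S with p < j, f i j := by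
  have hdisj : Disjoint ((S ×ˢ S).filter fun q => q.1 < p ∧ q.2 < p)
      ((S ×ˢ S).filter fun q => p < q.1 ∧ p < q.2) :=
    disjoint_filter.mpr fun q _ hlt hgt => lt_asymm hlt.1 hgt.1
  rw [← sum_product', ← sum_product', ← sum_product', ← filter_product, ← filter_product,
    ← sum_union hdisj, ← filter_or]
  refine (sum_filter_of_ne fun q hq hne => ?_).symm
  rw [mem_product] at hq
  by_contra hacross
  refine hne (hf q.1 hq.1 q.2 hq.2 ?_ ?_)
  · rw [min_le_iff]; by_contra! h; exact hacross (Or.inr h)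
  · rw [le_max_iff]; by_contra! h; exact hacross (Or.inl h)

section IntervalMin

variable {α : Type*} [LinearOrder α] [LocallyFiniteOrder α]

def intervalMin (c : α → ℝ) (i j : α) : ℝ :=
  (Icc (min i j) (max i j)).inf' (nonempty_Icc.mpr min_le_max) c

theorem intervalMin_comm (c : α → ℝ) (i j : α) : intervalMin c i j = intervalMin c j i := by
  simp only [intervalMin, min_comm i j, max_comm i j]

theorem intervalMin_sub_const (c : α → ℝ) (m : ℝ) (i j : α) :
    intervalMin (fun k => c k - m) i j = intervalMin c i j - m :=
  (apply_inf'_eq_inf'_comp _ (· - m) fun a b => (min_sub_sub_right a b m).symm).symm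

theorem intervalMin_le {c : α → ℝ} {i j k : α} (hk : k ∈ Icc (min i j) (max i j)) :
    intervalMin c i j ≤ c k :=
  inf'_le c hk

theorem le_intervalMin {c : α → ℝ} {i j : α} {m : ℝ}
    (h : ∀ k ∈ Icc (min i j) (max i j), m ≤ c k) : m ≤ intervalMin c i j :=
  le_inf' _ c h

theorem Icc_min_max_subset {S : Finset α} (hS : (S : Set α).OrdConnected) {i j : α}
    (hi : i ∈ S) (hj : j ∈ S) : Icc (min i j) (max i j) ⊆ S := by
  intro k hk
  have hmin : min i j ∈ (S : Set α) := by rcases min_choice i j with h | h <;> simpa [h]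
  have hmax : max i j ∈ (S : Set α) := by rcases max_choice i j with h | h <;> simpa [h]
  exact hS.out hmin hmax (mem_Icc.mp hk)

theorem sum_sum_mul_intervalMin_mul_nonneg (S : Finset α) (hS : (S : Set α).OrdConnected)
    (c : α → ℝ) (hc : ∀ k ∈ S, 0 ≤ c k) (x : α → ℝ) :
    0 ≤ ∑ i ∈ S, ∑ j ∈ S, x i * intervalMin c i j * x j := by
  induction S using Finset.strongInduction generalizing c with
  | H S ih =>
  rcases S.eq_empty_or_nonempty with rfl | hne
  · simp
  obtain ⟨p, hp, hpmin⟩ := S.exists_min_image c hne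
  set c' : α → ℝ := fun k => c k - c p
  have hc' : ∀ k ∈ S, 0 ≤ c' k := fun k hk => sub_nonneg.mpr (hpmin k hk)
  have hsplit : ∀ i j, intervalMin c i j = c p + intervalMin c' i j := fun i j => by
    rw [intervalMin_sub_const]; ring
  have hacross : ∀ i ∈ S, ∀ j ∈ S, min i j ≤ p → p ≤ max i j →
      x i * intervalMin c' i j * x j = 0 := fun i hi j hj h₁ h₂ => by
    have hpij : p ∈ Icc (min i j) (max i j) := mem_Icc.mpr ⟨h₁, h₂⟩
    have hzero : intervalMin c' i j = 0 :=
      le_antisymm (by simpa [c'] using intervalMin_le (c := c') hpij)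
        (le_intervalMin fun k hk => hc' k (Icc_min_max_subset hS hi hj hk))
    rw [hzero, mul_zero, zero_mul]
  have hblock : ∀ T ⊂ S, (T : Set α).OrdConnected →
      0 ≤ ∑ i ∈ T, ∑ j ∈ T, x i * intervalMin c' i j * x j := fun T hT hTc =>
    ih T hT hTc c' fun k hk => hc' k (hT.subset hk)
  have hlt : S.filter (· < p) ⊂ S := filter_ssubset.mpr ⟨p, hp, lt_irrefl p⟩
  have hgt : S.filter (p < ·) ⊂ S := filter_ssubset.mpr ⟨p, hp, lt_irrefl p⟩
  simp only [hsplit]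
  rw [sum_sum_mul_const_add_mul, sum_sum_eq_add_of_eq_zero_across S p _ hacross]
  exact add_nonneg (mul_nonneg (hc p hp) (sq_nonneg _)) (add_nonneg
    (hblock _ hlt (by rw [coe_filter]; exact hS.inter Set.ordConnected_Iio))
    (hblock _ hgt (by rw [coe_filter]; exact hS.inter Set.ordConnected_Ioi)))

end IntervalMin

theorem min_matrix_posSemidef_general
    (ℓ : ℕ) (c : Fin ℓ → ℝ) (hc : ∀ k, 0 < c k) :
    Matrix.PosSemidef (Matrix.of fun i j : Fin ℓ =>
      (Finset.Icc (min i j) (max i j)).inf'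
        (Finset.nonempty_Icc.mpr min_le_max) c) := by
  change Matrix.PosSemidef (Matrix.of (intervalMin c))
  refine Matrix.posSemidef_iff_dotProduct_mulVec.mpr ⟨?_, fun x => ?_⟩
  · ext i j
    exact intervalMin_comm c j i
  · have hquad := sum_sum_mul_intervalMin_mul_nonneg univ
      (by rw [coe_univ]; exact Set.ordConnected_univ) c (fun k _ => (hc k).le) x
    simpa [dotProduct, Matrix.mulVec, mul_sum, mul_assoc] using hquad

/-- For positive reals `c₁,…,c_ℓ`, the matrix `M_{ij} = min_{min(i,j) ≤ k ≤ max(i,j)} c_k`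
is positive semidefinite. -/
theorem min_matrix_posSemidef
    (ℓ : ℕ) (hℓ : 1 ≤ ℓ) (c : Fin ℓ → ℝ) (hc : ∀ k, 0 < c k) :
    Matrix.PosSemidef (Matrix.of fun i j : Fin ℓ =>
      (Finset.Icc (min i j) (max i j)).inf'
        (Finset.nonempty_Icc.mpr min_le_max) c) :=
  min_matrix_posSemidef_general ℓ c hc
end
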